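/- arXiv:2509.06363 — 2 statements merged into one kernel-verified Lean document; each statement's English description precedes it below -/
import Mathlib

section
/- Let m ≥ 4 be even. The number of orbits of the action of the dihedral group D_m on {1,-1}^m equals (1/(2m)) · (2^m + (m/2 + 1)·2^{m/2} + 2·Σ_{i=1}^{m/2 - 1} 2^{gcd(i,m)}). -/
/-!
By Burnside's lemma the number of orbits is the average number of sign vectors fixed by an
element of `D_m`. The rotation `r i` fixes exactly the vectors of period `i`, i.e. the functions
on `ZMod m ⧸ ⟨i⟩`, a group of order `gcd(i, m)`. The reflection `sr i` acts through the
involution `j ↦ 1 - i - j` of the positions, twisted by negation. Since `-u ≠ u` for a sign `u`,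
a fixed vector exists only when this involution has no fixed point, which for even `m` happens
exactly when `i` is even; the vector is then freely determined by its values on the `m / 2` even
positions. Finally `gcd(m - k, m) = gcd(k, m)` folds the rotation sum onto `1 ≤ k < m / 2`.
-/

/-- The action of the dihedral group `D_m` on `{1,-1}^m` (tuples indexed by `ZMod m`,
with position `i ∈ {1,…,m}` identified with `(i : ZMod m)`), where the rotation
`r = r 1` acts by `r(δ₁,…,δₘ) = (δₘ, δ₁, …, δ_{m-1})` and the reflection `f = sr 0`
acts by `f(δ₁,…,δₘ) = (-δₘ, …, -δ₂, -δ₁)`, i.e. `f(δ)ᵢ = -δ_{m+1-i}`. -/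
def dact {m : ℕ} : DihedralGroup m → (ZMod m → ℤˣ) → (ZMod m → ℤˣ)
  | .r i, δ => fun j => δ (j - i)
  | .sr i, δ => fun j => -δ (1 - i - j)

/-- The orbit of `δ` under the action of the dihedral group on `{1,-1}^m`. -/
def dihedralOrbit {m : ℕ} (δ : ZMod m → ℤˣ) : Set (ZMod m → ℤˣ) :=
  {δ' | ∃ σ : DihedralGroup m, dact σ δ = δ'}

open Function MulAction Finset

instance {m : ℕ} : MulAction (DihedralGroup m) (ZMod m → ℤˣ) where
  smul := dact
  one_smul δ := funext fun j => congrArg δ (sub_zero j)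
  mul_smul a b δ := by
    rcases a with i | i <;> rcases b with k | k <;> funext j <;>
      show dact _ δ j = dact _ (dact _ δ) j <;>
      simp only [DihedralGroup.r_mul_r, DihedralGroup.r_mul_sr,
        DihedralGroup.sr_mul_r, DihedralGroup.sr_mul_sr, dact, neg_neg] <;>
      ring_nf

theorem dihedralOrbit_eq_orbit {m : ℕ} :
    dihedralOrbit (m := m) = fun δ => orbit (DihedralGroup m) δ :=
  rfl

theorem ncard_range_orbit (G α : Type*) [Group G] [MulAction G α] :
    (Set.range fun a : α => orbit G a).ncard = Nat.card (orbitRel.Quotient G α) := by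
  have hrange :
      (Set.range fun a : α => orbit G a) = Set.range (orbitRel.Quotient.orbit (G := G)) := by
    rw [← Quotient.mk''_surjective.range_comp]
    simp only [comp_def, orbitRel.Quotient.orbit_mk]
  rw [hrange, Set.ncard_range_of_injective orbitRel.Quotient.orbit_injective]

theorem sum_natCard_fixedBy_eq_card_orbits_mul_card_group (G α : Type*) [Group G]
    [MulAction G α] [Fintype G] [Finite α] :
    ∑ g : G, Nat.card (fixedBy α g) = Nat.card (orbitRel.Quotient G α) * Fintype.card G := by
  classical
  have := Fintype.ofFinite α
  have := Fintype.ofFinite (orbitRel.Quotient G α)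
  simp only [Nat.card_eq_fintype_card]
  exact sum_card_fixedBy_eq_card_orbits_mul_card_group G α

section Periodic

variable {G α : Type*} [AddCommGroup G]

def periodicEquivFunOnQuotient (g : G) :
    {f : G → α // Periodic f g} ≃ (G ⧸ AddSubgroup.zmultiples g → α) where
  toFun f := Quotient.lift (s := QuotientAddGroup.leftRel _) f.1 fun a b hab => by
    obtain ⟨k, hk⟩ := AddSubgroup.mem_zmultiples_iff.mp (QuotientAddGroup.leftRel_apply.mp hab)
    simpa [hk] using (f.2.zsmul k a).symm
  invFun φ := ⟨φ ∘ QuotientAddGroup.mk, fun x => congrArg φ <| QuotientAddGroup.eq.mpr <| by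
    simp⟩
  left_inv _ := rfl
  right_inv φ := funext fun q => Quotient.inductionOn' q fun _ => rfl

theorem card_periodic [Finite G] (g : G) :
    Nat.card {f : G → α // Periodic f g} = Nat.card α ^ (AddSubgroup.zmultiples g).index := by
  rw [Nat.card_congr (periodicEquivFunOnQuotient g), Nat.card_fun]
  rfl

end Periodic

theorem ZMod.index_zmultiples {m : ℕ} [NeZero m] (i : ZMod m) :
    (AddSubgroup.zmultiples i).index = Nat.gcd i.val m := by
  have hm : 0 < m := Nat.pos_of_neZero m
  have horder : addOrderOf i = m / m.gcd i.val := by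
    rw [← ZMod.addOrderOf_coe _ hm.ne', ZMod.natCast_zmod_val]
  have hcard := (AddSubgroup.zmultiples i).card_mul_index
  rw [Nat.card_zmultiples, horder, Nat.card_zmod] at hcard
  rw [Nat.gcd_comm]
  have hpos : 0 < m / m.gcd i.val :=
    Nat.div_pos (Nat.gcd_le_left _ hm) (Nat.gcd_pos_of_pos_left _ hm)
  exact Nat.eq_of_mul_eq_mul_left hpos
    (hcard.trans (Nat.div_mul_cancel (Nat.gcd_dvd_left m i.val)).symm)

section Involutive

variable {β α : Type*} {τ : β → β} {p : β → Prop} [DecidablePred p]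

/-- `p` selects exactly one point of each pair `{x, τ x}`. -/
def equivariantEquivFunOnSubtype (hτ : Involutive τ) (hp : ∀ x, p (τ x) ↔ ¬ p x) {ν : α → α}
    (hν : Involutive ν) : {f : β → α // ∀ x, f (τ x) = ν (f x)} ≃ ({x // p x} → α) where
  toFun f x := f.1 x
  invFun g := ⟨fun x => if h : p x then g ⟨x, h⟩ else ν (g ⟨τ x, (hp x).2 h⟩), fun x => by
    by_cases h : p x
    · simp [h, hp, hτ x]
    · simp [h, hp, hν _]⟩
  left_inv f := Subtype.ext <| funext fun x => by
    by_cases h : p x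
    · simp [h]
    · simp [h, f.2 x, hν _]
  right_inv g := funext fun x => dif_pos x.2

theorem two_mul_card_subtype_of_involutive [Finite β] (hτ : Involutive τ)
    (hp : ∀ x, p (τ x) ↔ ¬ p x) : 2 * Nat.card {x // p x} = Nat.card β := by
  have hswap : {x // p x} ≃ {x // ¬ p x} :=
    (hτ.toPerm τ).subtypeEquiv fun x => by simp [hp]
  rw [two_mul]
  nth_rewrite 2 [Nat.card_congr hswap]
  rw [← Nat.card_sum, Nat.card_congr (Equiv.sumCompl p)]

end Involutive

theorem map_sub_eq_zero_iff_of_map_eq_one {R : Type*} [Ring R] (φ : R →+* ZMod 2) {c : R}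
    (hc : φ c = 1) (j : R) : φ (c - j) = 0 ↔ ¬ φ j = 0 := by
  rw [map_sub, hc]
  generalize φ j = x
  revert x
  decide

section Dihedral

variable {m : ℕ}

theorem DihedralGroup.sum_univ [NeZero m] {M : Type*} [AddCommMonoid M]
    (f : DihedralGroup m → M) :
    ∑ g, f g = ∑ i, f (DihedralGroup.r i) + ∑ i, f (DihedralGroup.sr i) := by
  rw [← DihedralGroup.equivSum.symm.sum_comp, Fintype.sum_sum_type]
  rfl

theorem mem_fixedBy_r_iff (i : ZMod m) (δ : ZMod m → ℤˣ) :
    δ ∈ fixedBy (ZMod m → ℤˣ) (DihedralGroup.r i) ↔ Periodic δ i := by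
  have hneg : δ ∈ fixedBy (ZMod m → ℤˣ) (DihedralGroup.r i) ↔ Periodic δ (-i) := by
    simp only [mem_fixedBy, funext_iff, Periodic, ← sub_eq_add_neg]
    rfl
  rw [hneg]
  exact ⟨fun h => neg_neg i ▸ h.neg, Periodic.neg⟩

theorem mem_fixedBy_sr_iff (i : ZMod m) (δ : ZMod m → ℤˣ) :
    δ ∈ fixedBy (ZMod m → ℤˣ) (DihedralGroup.sr i) ↔ ∀ j, δ (1 - i - j) = -δ j := by
  rw [mem_fixedBy, funext_iff]
  exact forall_congr' fun j => neg_eq_iff_eq_neg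

variable [NeZero m]

theorem card_fixedBy_r (i : ZMod m) :
    Nat.card (fixedBy (ZMod m → ℤˣ) (DihedralGroup.r i)) = 2 ^ Nat.gcd i.val m := by
  refine (Nat.card_congr (Equiv.subtypeEquivRight (mem_fixedBy_r_iff i))).trans ?_
  rw [card_periodic, ZMod.index_zmultiples, Nat.card_eq_fintype_card, Fintype.card_units_int]

section Reflection

variable (h2 : 2 ∣ m)

theorem card_ker_castHom_two :
    Nat.card {j : ZMod m // ZMod.castHom h2 (ZMod 2) j = 0} = m / 2 := by
  have h := two_mul_card_subtype_of_involutive (p := fun j => ZMod.castHom h2 (ZMod 2) j = 0)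
    (sub_sub_cancel (1 : ZMod m))
    (map_sub_eq_zero_iff_of_map_eq_one _ (map_one (ZMod.castHom h2 (ZMod 2))))
  rw [Nat.card_zmod] at h
  omega

theorem exists_add_self_eq_of_castHom_two_eq_zero {c : ZMod m}
    (hc : ZMod.castHom h2 (ZMod 2) c = 0) : ∃ h, h + h = c := by
  rw [ZMod.castHom_apply, ZMod.cast_eq_val, ZMod.natCast_eq_zero_iff] at hc
  obtain ⟨k, hk⟩ := hc
  exact ⟨k, by rw [← Nat.cast_add, ← two_mul, ← hk, ZMod.natCast_zmod_val]⟩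

theorem card_fixedBy_sr (i : ZMod m) :
    Nat.card (fixedBy (ZMod m → ℤˣ) (DihedralGroup.sr i)) =
      if ZMod.castHom h2 (ZMod 2) i = 0 then 2 ^ (m / 2) else 0 := by
  refine (Nat.card_congr (Equiv.subtypeEquivRight (mem_fixedBy_sr_iff i))).trans ?_
  split_ifs with hi
  · have hc : ZMod.castHom h2 (ZMod 2) (1 - i) = 1 := by rw [map_sub, map_one, hi, sub_zero]
    rw [Nat.card_congr (equivariantEquivFunOnSubtype
      (p := fun j => ZMod.castHom h2 (ZMod 2) j = 0) (sub_sub_cancel (1 - i))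
      (map_sub_eq_zero_iff_of_map_eq_one _ hc) neg_involutive), Nat.card_fun,
      card_ker_castHom_two, Nat.card_eq_fintype_card, Fintype.card_units_int]
  · have hc : ZMod.castHom h2 (ZMod 2) (1 - i) = 0 := by
      rw [map_sub_eq_zero_iff_of_map_eq_one _ (map_one _)]
      exact hi
    obtain ⟨h, hh⟩ := exists_add_self_eq_of_castHom_two_eq_zero h2 hc
    rw [Nat.card_eq_zero]
    refine Or.inl ⟨fun ⟨δ, hδ⟩ => neg_units_ne_self (δ h) ?_⟩
    simpa [← hh] using (hδ h).symm

end Reflection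

theorem sum_card_fixedBy_sr (h2 : 2 ∣ m) :
    ∑ i : ZMod m, Nat.card (fixedBy (ZMod m → ℤˣ) (DihedralGroup.sr i)) =
      m / 2 * 2 ^ (m / 2) := by
  simp only [card_fixedBy_sr h2, Finset.sum_ite, sum_const_zero, add_zero, sum_const, smul_eq_mul]
  rw [← Fintype.card_subtype, ← Nat.card_eq_fintype_card, card_ker_castHom_two]

end Dihedral

theorem ZMod.sum_univ_val {m : ℕ} [NeZero m] {M : Type*} [AddCommMonoid M] (f : ℕ → M) :
    ∑ i : ZMod m, f i.val = ∑ k ∈ range m, f k := by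
  obtain ⟨n, rfl⟩ := Nat.exists_eq_succ_of_ne_zero (NeZero.ne m)
  exact Fin.sum_univ_eq_sum_range f _

theorem sum_range_of_symm {M : Type*} [AddCommMonoid M] (f : ℕ → M) {m : ℕ} (h2 : 2 ∣ m)
    (hm : 0 < m) (hf : ∀ k, 0 < k → k < m / 2 → f (m - k) = f k) :
    ∑ k ∈ range m, f k = f 0 + f (m / 2) + 2 • ∑ k ∈ Icc 1 (m / 2 - 1), f k := by
  obtain ⟨n, rfl⟩ := h2
  rw [Nat.mul_div_cancel_left n two_pos] at hf ⊢
  have hIcc : Icc 1 (n - 1) = Ico 1 n := by ext k; simp only [mem_Icc, mem_Ico]; omega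
  have hupper : ∑ k ∈ Ico (n + 1) (2 * n), f k = ∑ k ∈ Ico 1 n, f k := by
    rw [← sum_congr rfl fun k hk => hf k (mem_Ico.1 hk).1 (mem_Ico.1 hk).2,
      sum_Ico_reflect _ _ (by omega)]
    congr 2
    omega
  rw [range_eq_Ico, sum_eq_sum_Ico_succ_bot hm,
    ← sum_Ico_consecutive _ (by omega : 1 ≤ n) (by omega),
    sum_eq_sum_Ico_succ_bot (by omega : n < 2 * n), hupper, hIcc]
  abel

/-- For even `m ≥ 4`, the number of orbits of the dihedral action on `{1,-1}^m` equals
`(1/(2m)) · (2^m + (m/2 + 1)·2^{m/2} + 2·Σ_{i=1}^{m/2-1} 2^{gcd(i,m)})`. -/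
theorem orbit_count_even (m : ℕ) (hm : 4 ≤ m) (heven : Even m) :
    (Set.ncard (Set.range (dihedralOrbit (m := m))) : ℚ) =
      (1 / (2 * m)) *
        (2 ^ m + ((m / 2 : ℕ) + 1) * 2 ^ (m / 2) +
          2 * ∑ i ∈ Finset.Icc 1 (m / 2 - 1), (2 : ℚ) ^ Nat.gcd i m) := by
  have : NeZero m := ⟨by omega⟩
  have h2 : 2 ∣ m := heven.two_dvd
  have hburnside :=
    sum_natCard_fixedBy_eq_card_orbits_mul_card_group (DihedralGroup m) (ZMod m → ℤˣ)
  simp only [DihedralGroup.sum_univ, card_fixedBy_r, sum_card_fixedBy_sr h2,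
    DihedralGroup.card] at hburnside
  rw [ZMod.sum_univ_val (fun k => 2 ^ Nat.gcd k m), sum_range_of_symm _ h2 (by omega)
    (fun k _ hk => by rw [Nat.gcd_self_sub_left (by omega)]), Nat.gcd_zero_left,
    Nat.gcd_eq_left (Nat.div_dvd_of_dvd h2)] at hburnside
  have hcast := congrArg (Nat.cast : ℕ → ℚ) hburnside
  push_cast [nsmul_eq_mul] at hcast
  rw [dihedralOrbit_eq_orbit, ncard_range_orbit, one_div_mul_eq_div, eq_div_iff (by positivity)]
  linear_combination -hcast
end

section
/- Let m ≥ 1 and k ≥ 2, and let δ ∈ {1,-1}^m. If Γ' ⊆ D_{km} is reversal-closed for the k-fold concatenation k(δ), then π(Γ') ⊆ D_m is reversal-closed for δ and π^{-1}(π(Γ')) is reversal-closed for k(δ) and contains Γ'. Consequently, every maximal reversal-closed subset Γ' for k(δ) satisfies Γ' = π^{-1}(π(Γ')). -/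
/-- `Γ ⊆ D_m` is reversal-closed for `δ ∈ {1,-1}^m` if for all `σ₁, σ₂ ∈ Γ` there
exists `σ₃ ∈ Γ` with `δ · σ₁(δ) · σ₂(δ) = σ₃(δ)`. -/
def ReversalClosed {m : ℕ} (Γ : Set (DihedralGroup m)) (δ : ZMod m → ℤˣ) : Prop :=
  ∀ σ₁ ∈ Γ, ∀ σ₂ ∈ Γ, ∃ σ₃ ∈ Γ, δ * dact σ₁ δ * dact σ₂ δ = dact σ₃ δ

/-- The group homomorphism `π : D_{km} → D_m` determined by `π(r) = r`, `π(f) = f`. -/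
def dihedralProj {m k : ℕ} : DihedralGroup (k * m) → DihedralGroup m
  | .r i => .r (ZMod.castHom (dvd_mul_left m k) (ZMod m) i)
  | .sr i => .sr (ZMod.castHom (dvd_mul_left m k) (ZMod m) i)

/-- The group homomorphism `ι : D_m → D_{km}` determined by `ι(r) = r^k`, `ι(f) = f`. -/
def dihedralIncl {m : ℕ} (k : ℕ) : DihedralGroup m → DihedralGroup (k * m)
  | .r i => .r ((k * i.val : ℕ) : ZMod (k * m))
  | .sr i => .sr ((k * i.val : ℕ) : ZMod (k * m))

/-- `k(δ) ∈ {1,-1}^{km}`: the concatenation of `k` copies of `δ ∈ {1,-1}^m`. -/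
def concatTuple {m : ℕ} (k : ℕ) (δ : ZMod m → ℤˣ) : ZMod (k * m) → ℤˣ :=
  fun j => δ (ZMod.castHom (dvd_mul_left m k) (ZMod m) j)

/-- `δ(k) ∈ {1,-1}^{km}`: the tuple in which each entry of `δ ∈ {1,-1}^m` is repeated
`k` times in place (position `p ∈ {1,…,km}` carries the value `δ_{⌈p/k⌉}`). -/
def repeatTuple {m : ℕ} (k : ℕ) (δ : ZMod m → ℤˣ) : ZMod (k * m) → ℤˣ :=
  fun j => δ ((((j - 1).val / k : ℕ) : ZMod m) + 1)

/-! The projection `π` intertwines the two actions: `σ(k(δ)) = k(π(σ)(δ))`. Since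
`δ ↦ k(δ)` is an injective homomorphism, reversal-closedness of `Γ'` for `k(δ)` descends to
`π(Γ')` for `δ`, and since `π` is surjective, reversal-closedness of any `Γ` for `δ` lifts to
`π⁻¹(Γ)` for `k(δ)`. Maximality then forces `Γ' = π⁻¹(π(Γ'))`. -/

lemma dihedralProj_surjective {m k : ℕ} :
    Function.Surjective (dihedralProj : DihedralGroup (k * m) → DihedralGroup m) := by
  have hcast := ZMod.ringHom_surjective (ZMod.castHom (dvd_mul_left m k) (ZMod m))
  rintro (i | i)
  · obtain ⟨j, rfl⟩ := hcast i
    exact ⟨.r j, rfl⟩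
  · obtain ⟨j, rfl⟩ := hcast i
    exact ⟨.sr j, rfl⟩

lemma concatTuple_injective {m : ℕ} (k : ℕ) :
    Function.Injective (concatTuple (m := m) k) := by
  intro a b h
  funext x
  obtain ⟨y, rfl⟩ := ZMod.ringHom_surjective (ZMod.castHom (dvd_mul_left m k) (ZMod m)) x
  exact congrFun h y

lemma concatTuple_mul {m : ℕ} (k : ℕ) (a b : ZMod m → ℤˣ) :
    concatTuple k (a * b) = concatTuple k a * concatTuple k b := rfl

lemma dact_concatTuple {m k : ℕ} (σ : DihedralGroup (k * m)) (δ : ZMod m → ℤˣ) :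
    dact σ (concatTuple k δ) = concatTuple k (dact (dihedralProj σ) δ) := by
  cases σ <;> funext j <;> simp [dact, dihedralProj, concatTuple, map_sub]

lemma ReversalClosed.image_dihedralProj {m k : ℕ} {δ : ZMod m → ℤˣ}
    {Γ' : Set (DihedralGroup (k * m))} (hΓ' : ReversalClosed Γ' (concatTuple k δ)) :
    ReversalClosed (dihedralProj '' Γ') δ := by
  rintro _ ⟨σ₁, hσ₁, rfl⟩ _ ⟨σ₂, hσ₂, rfl⟩
  obtain ⟨σ₃, hσ₃, heq⟩ := hΓ' σ₁ hσ₁ σ₂ hσ₂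
  refine ⟨dihedralProj σ₃, ⟨σ₃, hσ₃, rfl⟩, concatTuple_injective k ?_⟩
  simpa only [concatTuple_mul, dact_concatTuple] using heq

lemma ReversalClosed.preimage_dihedralProj {m k : ℕ} {δ : ZMod m → ℤˣ}
    {Γ : Set (DihedralGroup m)} (hΓ : ReversalClosed Γ δ) :
    ReversalClosed (dihedralProj ⁻¹' Γ) (concatTuple k δ) := by
  intro τ₁ hτ₁ τ₂ hτ₂
  obtain ⟨σ₃, hσ₃, heq⟩ := hΓ _ hτ₁ _ hτ₂
  obtain ⟨τ₃, rfl⟩ := dihedralProj_surjective (k := k) σ₃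
  refine ⟨τ₃, hσ₃, ?_⟩
  simp only [dact_concatTuple, ← concatTuple_mul, heq]

theorem maximal_reversal_closed_concat_general {m k : ℕ}
    (δ : ZMod m → ℤˣ) (Γ' : Set (DihedralGroup (k * m)))
    (hΓ' : ReversalClosed Γ' (concatTuple k δ)) :
    ReversalClosed (dihedralProj '' Γ') δ ∧
    ReversalClosed (dihedralProj ⁻¹' (dihedralProj '' Γ')) (concatTuple k δ) ∧
    Γ' ⊆ dihedralProj ⁻¹' (dihedralProj '' Γ') ∧
    ((∀ Γ'' : Set (DihedralGroup (k * m)),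
        ReversalClosed Γ'' (concatTuple k δ) → Γ' ⊆ Γ'' → Γ'' = Γ') →
      Γ' = dihedralProj ⁻¹' (dihedralProj '' Γ')) := by
  have hImage := hΓ'.image_dihedralProj
  have hSaturation := hImage.preimage_dihedralProj (k := k)
  have hSubset : Γ' ⊆ dihedralProj ⁻¹' (dihedralProj '' Γ') := Set.subset_preimage_image _ _
  exact ⟨hImage, hSaturation, hSubset, fun hMax => (hMax _ hSaturation hSubset).symm⟩

/-- If `Γ' ⊆ D_{km}` is reversal-closed for `k(δ)`, then `π(Γ')` is reversal-closed
for `δ`, `π⁻¹(π(Γ'))` is reversal-closed for `k(δ)` and contains `Γ'`; consequently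
every maximal reversal-closed subset `Γ'` for `k(δ)` satisfies `Γ' = π⁻¹(π(Γ'))`. -/
theorem maximal_reversal_closed_concat {m k : ℕ} (hm : 1 ≤ m) (hk : 2 ≤ k)
    (δ : ZMod m → ℤˣ) (Γ' : Set (DihedralGroup (k * m)))
    (hΓ' : ReversalClosed Γ' (concatTuple k δ)) :
    ReversalClosed (dihedralProj '' Γ') δ ∧
    ReversalClosed (dihedralProj ⁻¹' (dihedralProj '' Γ')) (concatTuple k δ) ∧
    Γ' ⊆ dihedralProj ⁻¹' (dihedralProj '' Γ') ∧
    ((∀ Γ'' : Set (DihedralGroup (k * m)),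
        ReversalClosed Γ'' (concatTuple k δ) → Γ' ⊆ Γ'' → Γ'' = Γ') →
      Γ' = dihedralProj ⁻¹' (dihedralProj '' Γ')) :=
  maximal_reversal_closed_concat_general δ Γ' hΓ'
end
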